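/- arXiv:2605.07049 — 5 statements merged into one kernel-verified Lean document; each statement's English description precedes it below -/
import Mathlib

section
/- Let K and B be positive integers with B dividing K, and for k ∈ {1,…,K} let [k] := B·⌊(k−1)/B⌋ + 1. Let X be a countable set, let p_1,…,p_K and μ be probability mass functions on X, and let C > 0 satisfy p_k(x) ≤ C·μ(x) for all k and x. Then for any functions f^(1),…,f^(K) : X → [0,1] and any real λ ≥ 1, ∑_{k=1}^K ∑_{x∈X} p_k(x)·f^(k)(x) ≤ C·B·log₂(1 + C·K/λ) + √( 4·C·log(1 + C·K/λ) · [ 2·K·λ + ∑_{k=1}^K ∑_{t<[k]} ∑_{x∈X} p_t(x)·f^(k)(x)² ] ), where the inner sum over t < [k] ranges over all episodes t strictly before the batch start [k]. -/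
/-!
Fix `x` and write `a k = p k x ≤ C μ(x)`, `g k = f k x`. Along the batches track the potential
`D j = λ μ(x) + ∑_{t ≤ jB} a t` (`batchPotential`), which grows from `λ μ(x)` to at most
`(λ + C K) μ(x)`. A batch that more than doubles `D` contributes at most `C B μ(x)`, and at most
`log₂ (1 + C K / λ)` batches do so. On any other batch, AM–GM gives
`a k g k ≤ C μ(x) a k / (2 ε D j) + (ε / 2) D j (g k)²`, and the batch mass over `D j` is at most
`2 log (D (j + 1) / D j)`, which telescopes to `2 log (1 + C K / λ)`. Summing over `x` and
optimising over `ε > 0` gives the square root.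
-/

open scoped BigOperators

noncomputable section

/-- Batch start of episode `k` under fixed batch size `B`:
`[k] := B * ⌊(k-1)/B⌋ + 1`. -/
def batchStart (B k : ℕ) : ℕ := B * ((k - 1) / B) + 1

open Finset Real

lemma batchStart_le {B k : ℕ} (hk : 1 ≤ k) : batchStart B k ≤ k := by
  have := Nat.mul_div_le (k - 1) B
  unfold batchStart
  omega

lemma mem_Icc_of_mem_Ico_batchStart {B N k t : ℕ} (hk : k ∈ Icc 1 N)
    (ht : t ∈ Ico 1 (batchStart B k)) : t ∈ Icc 1 N := by
  have := batchStart_le (B := B) (mem_Icc.1 hk).1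
  simp only [mem_Ico, mem_Icc] at hk ht ⊢
  omega

lemma batchStart_eq_of_mem_Ico {B j k : ℕ} (hk : k ∈ Ico (B * j + 1) (B * j + B + 1)) :
    batchStart B k = B * j + 1 := by
  rw [mem_Ico] at hk
  rw [batchStart, Nat.div_eq_of_lt_le] <;> grind

lemma sum_Icc_eq_sum_range_sum_Ico {M : Type*} [AddCommMonoid M] (F : ℕ → M) (B n : ℕ) :
    ∑ k ∈ Icc 1 (B * n), F k = ∑ j ∈ range n, ∑ k ∈ Ico (B * j + 1) (B * j + B + 1), F k := by
  induction n with
  | zero => simp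
  | succ n ih =>
    rw [sum_range_succ, ← ih, ← Ico_add_one_right_eq_Icc, ← Ico_add_one_right_eq_Icc, mul_add_one,
      sum_Ico_consecutive _ (by omega) (by omega)]

lemma div_le_two_mul_log_add_sub_log {D A : ℝ} (hD : 0 < D) (hA : 0 ≤ A) (hAD : A ≤ D) :
    A / D ≤ 2 * (log (D + A) - log D) := by
  have h := one_sub_inv_le_log_of_pos (div_pos (add_pos_of_pos_of_nonneg hD hA) hD)
  rw [log_div (by positivity) hD.ne', inv_div, one_sub_div (by positivity),
    add_sub_cancel_left] at h
  calc A / D = 2 * (A / (D + D)) := by field_simp; ring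
    _ ≤ 2 * (A / (D + A)) := by gcongr
    _ ≤ _ := by gcongr

lemma mul_le_div_add_mul_sq {a c g D ε : ℝ} (ha : 0 ≤ a) (hac : a ≤ c) (hD : 0 < D) (hε : 0 < ε) :
    a * g ≤ c * a / (2 * ε * D) + ε / 2 * (D * g ^ 2) := by
  have hsq := two_mul_le_add_sq a (ε * D * g)
  have hca : a ^ 2 ≤ c * a := by nlinarith
  rw [div_add' _ _ _ (by positivity), le_div_iff₀ (by positivity)]
  nlinarith

lemma summable_mul_of_mem_Icc {X : Type*} {p g : X → ℝ} (hp : Summable p) (hp0 : ∀ x, 0 ≤ p x)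
    (hg : ∀ x, g x ∈ Set.Icc 0 1) : Summable fun x => p x * g x :=
  hp.of_nonneg_of_le (fun x => mul_nonneg (hp0 x) (hg x).1)
    fun x => mul_le_of_le_one_right (hp0 x) (hg x).2

lemma le_add_sqrt_of_forall_le_add_div_add_mul {x y a b : ℝ} (ha : 0 < a) (hb : 0 < b)
    (h : ∀ ε > 0, x ≤ y + a / ε + b * ε) : x ≤ y + √(4 * a * b) := by
  obtain ⟨s, hs, rfl⟩ : ∃ s > 0, a = s ^ 2 := ⟨√a, sqrt_pos.2 ha, (sq_sqrt ha.le).symm⟩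
  obtain ⟨t, ht, rfl⟩ : ∃ t > 0, b = t ^ 2 := ⟨√b, sqrt_pos.2 hb, (sq_sqrt hb.le).symm⟩
  have hsqrt : √(4 * s ^ 2 * t ^ 2) = 2 * s * t := by
    rw [show 4 * s ^ 2 * t ^ 2 = (2 * s * t) ^ 2 by ring, sqrt_sq (by positivity)]
  calc x ≤ y + s ^ 2 / (s / t) + t ^ 2 * (s / t) := h _ (by positivity)
    _ = y + √(4 * s ^ 2 * t ^ 2) := by
        rw [hsqrt]
        field_simp
        ring

lemma two_pow_card_filter_mul_le (D : ℕ → ℝ) (n : ℕ) (hD : ∀ j < n, D j ≤ D (j + 1)) :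
    (2 : ℝ) ^ #{j ∈ range n | 2 * D j < D (j + 1)} * D 0 ≤ D n := by
  induction n with
  | zero => simp
  | succ n ih =>
    have ih := ih fun j hj => hD j (by omega)
    rw [range_add_one, filter_insert]
    split_ifs with hdoubling
    · rw [card_insert_of_notMem (by simp), pow_succ]
      linarith
    · exact ih.trans (hD n (by omega))

lemma card_filter_le_logb (D : ℕ → ℝ) (n : ℕ) (hD : ∀ j < n, D j ≤ D (j + 1))
    (h0 : 0 < D 0) :
    (#{j ∈ range n | 2 * D j < D (j + 1)} : ℝ) ≤ logb 2 (D n / D 0) := by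
  have hpow := two_pow_card_filter_mul_le D n hD
  have hn : D 0 ≤ D n := le_trans (le_mul_of_one_le_left h0.le (one_le_pow₀ one_le_two)) hpow
  rw [le_logb_iff_rpow_le one_lt_two (div_pos (h0.trans_le hn) h0), rpow_natCast,
    le_div_iff₀ h0]
  exact hpow

lemma sum_mul_le_of_batch (s : Finset ℕ) (a g : ℕ → ℝ) {c D ε : ℝ} (hc : 0 ≤ c) (hD : 0 < D)
    (hε : 0 < ε) (ha : ∀ k ∈ s, 0 ≤ a k) (hac : ∀ k ∈ s, a k ≤ c) (hg : ∀ k ∈ s, g k ≤ 1) :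
    ∑ k ∈ s, a k * g k ≤ (if 2 * D < D + ∑ k ∈ s, a k then #s * c else 0)
      + c / ε * (log (D + ∑ k ∈ s, a k) - log D) + ε / 2 * ∑ k ∈ s, D * g k ^ 2 := by
  set A := ∑ k ∈ s, a k
  have hA : 0 ≤ A := sum_nonneg ha
  have hlog : 0 ≤ log (D + A) - log D := sub_nonneg.2 (log_le_log hD (by linarith))
  have hsq : 0 ≤ ε / 2 * ∑ k ∈ s, D * g k ^ 2 := by positivity
  split_ifs with hdoubling
  · have hsum : ∑ k ∈ s, a k * g k ≤ #s * c := by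
      calc ∑ k ∈ s, a k * g k ≤ A :=
            sum_le_sum fun k hk => mul_le_of_le_one_right (ha k hk) (hg k hk)
        _ ≤ #s • c := sum_le_card_nsmul _ _ _ hac
        _ = #s * c := nsmul_eq_mul _ _
    have : 0 ≤ c / ε * (log (D + A) - log D) := by positivity
    linarith
  · calc ∑ k ∈ s, a k * g k ≤ ∑ k ∈ s, (c * a k / (2 * ε * D) + ε / 2 * (D * g k ^ 2)) :=
          sum_le_sum fun k hk => mul_le_div_add_mul_sq (ha k hk) (hac k hk) hD hε
      _ = c / (2 * ε) * (A / D) + ε / 2 * ∑ k ∈ s, D * g k ^ 2 := by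
          rw [sum_add_distrib, ← sum_div, ← mul_sum, ← mul_sum]
          ring
      _ ≤ c / (2 * ε) * (2 * (log (D + A) - log D)) + ε / 2 * ∑ k ∈ s, D * g k ^ 2 := by
          gcongr
          exact div_le_two_mul_log_add_sub_log hD hA (by linarith)
      _ = _ := by rw [zero_add]; field_simp

def batchPotential (B : ℕ) (a : ℕ → ℝ) (d : ℝ) (j : ℕ) : ℝ := ∑ t ∈ Ico 1 (B * j + 1), a t + d

section batchPotential

variable {B n : ℕ} {a : ℕ → ℝ} {c d : ℝ}

lemma batchPotential_zero : batchPotential B a d 0 = d := by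
  simp [batchPotential]

lemma batchPotential_succ (j : ℕ) :
    batchPotential B a d (j + 1) =
      batchPotential B a d j + ∑ k ∈ Ico (B * j + 1) (B * j + B + 1), a k := by
  rw [batchPotential, batchPotential, mul_add_one,
    ← sum_Ico_consecutive a (by omega : 1 ≤ B * j + 1) (by omega : B * j + 1 ≤ B * j + B + 1)]
  ring

lemma batchPotential_eq_of_mem_Ico {j k : ℕ} (hk : k ∈ Ico (B * j + 1) (B * j + B + 1)) :
    ∑ t ∈ Ico 1 (batchStart B k), a t + d = batchPotential B a d j := by
  rw [batchStart_eq_of_mem_Ico hk, batchPotential]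

lemma Ico_batch_subset_Icc {j : ℕ} (hj : j < n) :
    Ico (B * j + 1) (B * j + B + 1) ⊆ Icc 1 (B * n) := by
  intro k hk
  have : B * j + B ≤ B * n := by rw [← mul_add_one]; exact Nat.mul_le_mul_left B hj
  simp only [mem_Ico, mem_Icc] at hk ⊢
  omega

lemma le_batchPotential (ha : ∀ k ∈ Icc 1 (B * n), 0 ≤ a k) {j : ℕ} (hj : j ≤ n) :
    d ≤ batchPotential B a d j := by
  refine le_add_of_nonneg_left (sum_nonneg fun t ht => ha t ?_)
  have : B * j ≤ B * n := Nat.mul_le_mul_left B hj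
  simp only [mem_Ico, mem_Icc] at ht ⊢
  omega

lemma batchPotential_le_succ (ha : ∀ k ∈ Icc 1 (B * n), 0 ≤ a k) {j : ℕ} (hj : j < n) :
    batchPotential B a d j ≤ batchPotential B a d (j + 1) := by
  rw [batchPotential_succ]
  exact le_add_of_nonneg_right (sum_nonneg fun k hk => ha k (Ico_batch_subset_Icc hj hk))

lemma batchPotential_le (hac : ∀ k ∈ Icc 1 (B * n), a k ≤ c) :
    batchPotential B a d n ≤ d + B * n * c := by
  have : ∑ t ∈ Ico 1 (B * n + 1), a t ≤ #(Ico 1 (B * n + 1)) • c :=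
    sum_le_card_nsmul _ _ _ fun t ht => hac t (by rwa [Ico_add_one_right_eq_Icc] at ht)
  simp only [Nat.card_Ico, add_tsub_cancel_right, nsmul_eq_mul, Nat.cast_mul] at this
  rw [batchPotential]
  linarith

end batchPotential

lemma sum_mul_le_batched (B n : ℕ) (a g : ℕ → ℝ) {c d ε : ℝ} (hc : 0 ≤ c) (hd : 0 < d)
    (hε : 0 < ε) (ha : ∀ k ∈ Icc 1 (B * n), 0 ≤ a k) (hac : ∀ k ∈ Icc 1 (B * n), a k ≤ c)
    (hg : ∀ k ∈ Icc 1 (B * n), g k ≤ 1) :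
    ∑ k ∈ Icc 1 (B * n), a k * g k ≤
      B * c * logb 2 (1 + B * n * c / d) + c / ε * log (1 + B * n * c / d)
        + ε / 2 * ∑ k ∈ Icc 1 (B * n), (∑ t ∈ Ico 1 (batchStart B k), a t + d) * g k ^ 2 := by
  set D := batchPotential B a d
  have hD_pos : ∀ j ≤ n, 0 < D j := fun j hj => hd.trans_le (le_batchPotential ha hj)
  have hD_mono : ∀ j < n, D j ≤ D (j + 1) := fun j hj => batchPotential_le_succ ha hj
  have hratio_pos : 0 < D n / D 0 := div_pos (hD_pos n le_rfl) (hD_pos 0 (Nat.zero_le n))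
  have hratio : D n / D 0 ≤ 1 + B * n * c / d := by
    rw [show D 0 = d from batchPotential_zero, div_le_iff₀ hd, add_mul, div_mul_cancel₀ _ hd.ne']
    linarith [batchPotential_le (d := d) hac]
  have hcard : ∀ j, (#(Ico (B * j + 1) (B * j + B + 1)) : ℝ) = B := fun j => by
    rw [Nat.card_Ico, Nat.add_sub_add_right, Nat.add_sub_cancel_left]
  rw [sum_Icc_eq_sum_range_sum_Ico, sum_Icc_eq_sum_range_sum_Ico]
  calc ∑ j ∈ range n, ∑ k ∈ Ico (B * j + 1) (B * j + B + 1), a k * g k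
      ≤ ∑ j ∈ range n, ((if 2 * D j < D (j + 1) then B * c else 0)
          + c / ε * (log (D (j + 1)) - log (D j))
          + ε / 2 * ∑ k ∈ Ico (B * j + 1) (B * j + B + 1), D j * g k ^ 2) := by
        refine sum_le_sum fun j hj => ?_
        have hj := mem_range.1 hj
        rw [show D (j + 1) = D j + _ from batchPotential_succ j, ← hcard j]
        exact sum_mul_le_of_batch _ a g hc (hD_pos j hj.le) hε
          (fun k hk => ha k (Ico_batch_subset_Icc hj hk))
          (fun k hk => hac k (Ico_batch_subset_Icc hj hk))
          (fun k hk => hg k (Ico_batch_subset_Icc hj hk))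
    _ = #{j ∈ range n | 2 * D j < D (j + 1)} * (B * c) + c / ε * log (D n / D 0)
          + ε / 2 * ∑ j ∈ range n, ∑ k ∈ Ico (B * j + 1) (B * j + B + 1), D j * g k ^ 2 := by
        rw [sum_add_distrib, sum_add_distrib, sum_ite, sum_const_zero, add_zero, sum_const,
          nsmul_eq_mul, ← mul_sum, ← mul_sum, sum_range_sub (fun j => log (D j)),
          log_div (hD_pos n le_rfl).ne' (hD_pos 0 (Nat.zero_le n)).ne']
    _ ≤ B * c * logb 2 (1 + B * n * c / d) + c / ε * log (1 + B * n * c / d)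
          + ε / 2 * ∑ j ∈ range n, ∑ k ∈ Ico (B * j + 1) (B * j + B + 1), D j * g k ^ 2 := by
        have hcount := (card_filter_le_logb D n hD_mono (hD_pos 0 (Nat.zero_le n))).trans
          (logb_le_logb_of_le one_lt_two hratio_pos hratio)
        gcongr ?_ + ?_ + _
        · nlinarith [mul_nonneg (Nat.cast_nonneg B : (0 : ℝ) ≤ B) hc]
        · gcongr
    _ = _ := by
        congr 2
        exact sum_congr rfl fun j _ => sum_congr rfl fun k hk => by
          rw [batchPotential_eq_of_mem_Ico hk]

lemma sum_mul_le_of_le_mul (B n : ℕ) (a g : ℕ → ℝ) {C u lam ε : ℝ} (hC : 0 ≤ C) (hu : 0 ≤ u)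
    (hlam : 0 < lam) (hε : 0 < ε) (ha : ∀ k ∈ Icc 1 (B * n), 0 ≤ a k)
    (hac : ∀ k ∈ Icc 1 (B * n), a k ≤ C * u) (hg : ∀ k ∈ Icc 1 (B * n), g k ∈ Set.Icc 0 1) :
    ∑ k ∈ Icc 1 (B * n), a k * g k ≤
      (C * B * logb 2 (1 + C * ↑(B * n) / lam) + C / ε * log (1 + C * ↑(B * n) / lam)
          + ε / 2 * ↑(B * n) * lam) * u
        + ε / 2 * ∑ k ∈ Icc 1 (B * n), ∑ t ∈ Ico 1 (batchStart B k), a t * g k ^ 2 := by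
  have hsq : ∀ k ∈ Icc 1 (B * n), g k ^ 2 ≤ 1 := fun k hk =>
    pow_le_one₀ (hg k hk).1 (hg k hk).2
  have hpast : 0 ≤ ε / 2 * ∑ k ∈ Icc 1 (B * n), ∑ t ∈ Ico 1 (batchStart B k), a t * g k ^ 2 :=
    mul_nonneg (by positivity) <| sum_nonneg fun k hk => sum_nonneg fun t ht =>
      mul_nonneg (ha t (mem_Icc_of_mem_Ico_batchStart hk ht)) (sq_nonneg _)
  rcases hu.eq_or_lt with rfl | hu
  · have hzero : ∑ k ∈ Icc 1 (B * n), a k * g k = 0 :=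
      sum_eq_zero fun k hk => by rw [le_antisymm (by simpa using hac k hk) (ha k hk), zero_mul]
    rw [hzero, mul_zero, zero_add]
    exact hpast
  have hratio : (B : ℝ) * n * (C * u) / (lam * u) = C * ↑(B * n) / lam := by
    push_cast
    field_simp
  have hreg : ∑ k ∈ Icc 1 (B * n), (∑ t ∈ Ico 1 (batchStart B k), a t + lam * u) * g k ^ 2 ≤
      ∑ k ∈ Icc 1 (B * n), ∑ t ∈ Ico 1 (batchStart B k), a t * g k ^ 2 + ↑(B * n) * (lam * u) := by
    calc ∑ k ∈ Icc 1 (B * n), (∑ t ∈ Ico 1 (batchStart B k), a t + lam * u) * g k ^ 2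
        = ∑ k ∈ Icc 1 (B * n), ∑ t ∈ Ico 1 (batchStart B k), a t * g k ^ 2
            + ∑ k ∈ Icc 1 (B * n), lam * u * g k ^ 2 := by
          simp only [add_mul, sum_mul, sum_add_distrib]
      _ ≤ ∑ k ∈ Icc 1 (B * n), ∑ t ∈ Ico 1 (batchStart B k), a t * g k ^ 2
            + ∑ k ∈ Icc 1 (B * n), lam * u := by
          grw [sum_le_sum fun k hk => mul_le_of_le_one_right (by positivity) (hsq k hk)]
      _ = _ := by simp
  have hbatched := sum_mul_le_batched B n a g (mul_nonneg hC hu.le) (mul_pos hlam hu) hε ha hac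
    fun k hk => (hg k hk).2
  rw [hratio] at hbatched
  calc ∑ k ∈ Icc 1 (B * n), a k * g k
      ≤ B * (C * u) * logb 2 (1 + C * ↑(B * n) / lam) + C * u / ε * log (1 + C * ↑(B * n) / lam)
          + ε / 2 * (∑ k ∈ Icc 1 (B * n), ∑ t ∈ Ico 1 (batchStart B k), a t * g k ^ 2
            + ↑(B * n) * (lam * u)) := by grw [hbatched, hreg]
    _ = _ := by ring

lemma batched_coverability_eps {X : Type*} (B n : ℕ) (p : ℕ → X → ℝ) (μ : X → ℝ)
    (hp_nonneg : ∀ k ∈ Icc 1 (B * n), ∀ x, 0 ≤ p k x)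
    (hp_summable : ∀ k ∈ Icc 1 (B * n), Summable (p k)) (hμ_nonneg : ∀ x, 0 ≤ μ x)
    (hμ_summable : Summable μ) (hμ_sum : ∑' x, μ x = 1) {C : ℝ} (hC : 0 ≤ C)
    (hcov : ∀ k ∈ Icc 1 (B * n), ∀ x, p k x ≤ C * μ x) (f : ℕ → X → ℝ)
    (hf : ∀ k ∈ Icc 1 (B * n), ∀ x, f k x ∈ Set.Icc (0 : ℝ) 1) {lam ε : ℝ} (hlam : 0 < lam)
    (hε : 0 < ε) :
    ∑ k ∈ Icc 1 (B * n), ∑' x, p k x * f k x ≤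
      C * B * logb 2 (1 + C * ↑(B * n) / lam) + C * log (1 + C * ↑(B * n) / lam) / ε
        + (∑ k ∈ Icc 1 (B * n), ∑ t ∈ Ico 1 (batchStart B k), ∑' x, p t x * f k x ^ 2
          + ↑(B * n) * lam) / 2 * ε := by
  have hsq : ∀ k ∈ Icc 1 (B * n), ∀ x, f k x ^ 2 ∈ Set.Icc (0 : ℝ) 1 := fun k hk x =>
    ⟨sq_nonneg _, pow_le_one₀ (hf k hk x).1 (hf k hk x).2⟩
  have hlhs := hasSum_sum fun k hk =>
    (summable_mul_of_mem_Icc (hp_summable k hk) (hp_nonneg k hk) (hf k hk)).hasSum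
  set ρ := 1 + C * ↑(B * n) / lam
  have hpast := hasSum_sum fun k hk => hasSum_sum fun t ht =>
    (summable_mul_of_mem_Icc (hp_summable t (mem_Icc_of_mem_Ico_batchStart (B := B) hk ht))
      (hp_nonneg t (mem_Icc_of_mem_Ico_batchStart hk ht)) (hsq k hk)).hasSum
  have hrhs := (hμ_summable.hasSum.mul_left
    (C * B * logb 2 ρ + C / ε * log ρ + ε / 2 * ↑(B * n) * lam)).add (hpast.mul_left (ε / 2))
  have hpointwise := hasSum_le (fun x => sum_mul_le_of_le_mul B n (fun k => p k x)
    (fun k => f k x) hC (hμ_nonneg x) hlam hε (fun k hk => hp_nonneg k hk x)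
    (fun k hk => hcov k hk x) (fun k hk => hf k hk x)) hlhs hrhs
  rw [hμ_sum, mul_one] at hpointwise
  linarith [show C * log ρ / ε = C / ε * log ρ by ring]

theorem batched_coverability_general
    {X : Type*}
    (K B : ℕ) (hK : 0 < K) (hBK : B ∣ K)
    (p : ℕ → X → ℝ) (μ : X → ℝ)
    (hp_nonneg : ∀ k ∈ Finset.Icc 1 K, ∀ x, 0 ≤ p k x)
    (hp_summable : ∀ k ∈ Finset.Icc 1 K, Summable (p k))
    (hμ_nonneg : ∀ x, 0 ≤ μ x)
    (hμ_summable : Summable μ)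
    (hμ_sum : ∑' x, μ x = 1)
    (C : ℝ) (hC : 0 < C)
    (hcov : ∀ k ∈ Finset.Icc 1 K, ∀ x, p k x ≤ C * μ x)
    (f : ℕ → X → ℝ)
    (hf : ∀ k ∈ Finset.Icc 1 K, ∀ x, f k x ∈ Set.Icc (0 : ℝ) 1)
    (lam : ℝ) (hlam : 1 ≤ lam) :
    ∑ k ∈ Finset.Icc 1 K, ∑' x, p k x * f k x ≤
      C * B * Real.logb 2 (1 + C * K / lam) +
        Real.sqrt (4 * C * Real.log (1 + C * K / lam) *
          (2 * K * lam +
            ∑ k ∈ Finset.Icc 1 K, ∑ t ∈ Finset.Ico 1 (batchStart B k),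
              ∑' x, p t x * (f k x) ^ 2)) := by
  obtain ⟨M, rfl⟩ := hBK
  set S := ∑ k ∈ Icc 1 (B * M), ∑ t ∈ Ico 1 (batchStart B k), ∑' x, p t x * f k x ^ 2
  set L := log (1 + C * ↑(B * M) / lam)
  have hlam0 : 0 < lam := by linarith
  have hK_pos : (0 : ℝ) < ↑(B * M) := by exact_mod_cast hK
  have hL : 0 < L := log_pos (by linarith [show 0 < C * ↑(B * M) / lam by positivity])
  have hS : 0 ≤ S := sum_nonneg fun k hk => sum_nonneg fun t ht => tsum_nonneg fun x =>
    mul_nonneg (hp_nonneg t (mem_Icc_of_mem_Ico_batchStart hk ht) x) (sq_nonneg _)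
  calc ∑ k ∈ Icc 1 (B * M), ∑' x, p k x * f k x
      ≤ C * B * logb 2 (1 + C * ↑(B * M) / lam) + √(4 * (C * L) * ((S + ↑(B * M) * lam) / 2)) :=
        le_add_sqrt_of_forall_le_add_div_add_mul (by positivity) (by positivity) fun ε hε =>
          batched_coverability_eps B M p μ hp_nonneg hp_summable hμ_nonneg hμ_summable hμ_sum hC.le
            hcov f hf hlam0 hε
    _ ≤ C * B * logb 2 (1 + C * ↑(B * M) / lam) + √(4 * C * L * (2 * ↑(B * M) * lam + S)) := by
        refine (add_le_add_iff_left _).2 (sqrt_le_sqrt ?_)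
        nlinarith [mul_nonneg (mul_pos hC hL).le
          (by positivity : 0 ≤ 3 * (↑(B * M) : ℝ) * lam + S)]

/-- Lemma C.1 of the paper: the key batched coverability inequality. -/
theorem batched_coverability
    {X : Type*} [Countable X]
    (K B : ℕ) (hK : 0 < K) (hB : 0 < B) (hBK : B ∣ K)
    (p : ℕ → X → ℝ) (μ : X → ℝ)
    (hp_nonneg : ∀ k ∈ Finset.Icc 1 K, ∀ x, 0 ≤ p k x)
    (hp_summable : ∀ k ∈ Finset.Icc 1 K, Summable (p k))
    (hp_sum : ∀ k ∈ Finset.Icc 1 K, ∑' x, p k x = 1)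
    (hμ_nonneg : ∀ x, 0 ≤ μ x)
    (hμ_summable : Summable μ)
    (hμ_sum : ∑' x, μ x = 1)
    (C : ℝ) (hC : 0 < C)
    (hcov : ∀ k ∈ Finset.Icc 1 K, ∀ x, p k x ≤ C * μ x)
    (f : ℕ → X → ℝ)
    (hf : ∀ k ∈ Finset.Icc 1 K, ∀ x, f k x ∈ Set.Icc (0 : ℝ) 1)
    (lam : ℝ) (hlam : 1 ≤ lam) :
    ∑ k ∈ Finset.Icc 1 K, ∑' x, p k x * f k x ≤
      C * B * Real.logb 2 (1 + C * K / lam) +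
        Real.sqrt (4 * C * Real.log (1 + C * K / lam) *
          (2 * K * lam +
            ∑ k ∈ Finset.Icc 1 K, ∑ t ∈ Finset.Ico 1 (batchStart B k),
              ∑' x, p t x * (f k x) ^ 2)) :=
  batched_coverability_general K B hK hBK p μ hp_nonneg hp_summable hμ_nonneg hμ_summable hμ_sum C
    hC hcov f hf lam hlam
end
end

section
/- Let K and B be positive integers with B dividing K and M := K/B, and for m ∈ {1,…,M} let t_m := (m−1)·B + 1 and t_{M+1} := K+1. Let X be a countable set, let p_1,…,p_K and μ be probability mass functions on X, let C > 0 satisfy p_k(x) ≤ C·μ(x) for all k and x, let λ > 0, and let f^(1),…,f^(K) : X → [0,1]. For x ∈ X with μ(x) > 0, define P_m(x) := λ·μ(x) + ∑_{t=1}^{m·B} p_t(x) and B_x := {m ∈ {1,…,M} : P_m(x) ≥ 2·P_{m−1}(x)}. Then ∑_{x∈X, μ(x)>0} ∑_{m∈B_x} ∑_{k=t_m}^{t_{m+1}−1} p_k(x)·f^(k)(x) ≤ C·B·log₂(1 + C·K/λ). -/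
open scoped BigOperators

noncomputable section

/-- `P_m(x) := λ·μ(x) + ∑_{t=1}^{m·B} p_t(x)`. -/
def Pseq {X : Type*} (lam : ℝ) (μ : X → ℝ) (p : ℕ → X → ℝ) (B m : ℕ) (x : X) : ℝ :=
  lam * μ x + ∑ t ∈ Finset.Icc 1 (m * B), p t x

/-- The bad-batch set `B_x := {m ∈ {1,…,M} : P_m(x) ≥ 2·P_{m-1}(x)}`. -/
def badBatches {X : Type*} (lam : ℝ) (μ : X → ℝ) (p : ℕ → X → ℝ) (B M : ℕ) (x : X) :
    Finset ℕ :=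
  (Finset.Icc 1 M).filter fun m => 2 * Pseq lam μ p B (m - 1) x ≤ Pseq lam μ p B m x

/-!
A batch `m` is bad at `x` when it at least doubles the potential `P_m(x)`. The potential is
nondecreasing, starts at `λ μ(x)` and ends at most at `(λ + C K) μ(x)`, so there are at most
`log₂ (1 + C K / λ)` bad batches. Each batch has `B` episodes, each contributing at most
`p_k(x) ≤ C μ(x)`, so the bad-batch term at `x` is at most `C B log₂ (1 + C K / λ) μ(x)`;
summing over `x` uses `∑ μ = 1`.
-/

open Finset

lemma two_pow_card_doubling_mul_le {a : ℕ → ℝ} {M : ℕ} (hmono : ∀ n < M, a n ≤ a (n + 1)) :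
    2 ^ #{m ∈ Icc 1 M | 2 * a (m - 1) ≤ a m} * a 0 ≤ a M := by
  induction M with
  | zero => simp
  | succ M ih =>
    have ih := ih fun n hn => hmono n (by omega)
    have hnotMem : M + 1 ∉ {m ∈ Icc 1 M | 2 * a (m - 1) ≤ a m} := by simp
    rw [← insert_Icc_right_eq_Icc_add_one (by omega), filter_insert]
    split_ifs with hdouble
    · rw [card_insert_of_notMem hnotMem, pow_succ]
      simp only [Nat.add_sub_cancel] at hdouble
      linarith
    · linarith [hmono M (by omega)]

lemma card_doubling_le_logb {a : ℕ → ℝ} {M : ℕ} (h0 : 0 < a 0)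
    (hmono : ∀ n < M, a n ≤ a (n + 1)) :
    (#{m ∈ Icc 1 M | 2 * a (m - 1) ≤ a m} : ℝ) ≤ Real.logb 2 (a M / a 0) := by
  have hle := two_pow_card_doubling_mul_le hmono
  have hM : 0 < a M := (mul_pos (pow_pos two_pos _) h0).trans_le hle
  rw [Real.le_logb_iff_rpow_le one_lt_two (div_pos hM h0), Real.rpow_natCast, le_div_iff₀ h0]
  exact hle

section Potential

variable {X : Type*} {lam : ℝ} {μ : X → ℝ} {p : ℕ → X → ℝ} {B : ℕ} {x : X}

lemma Pseq_zero : Pseq lam μ p B 0 x = lam * μ x := by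
  simp [Pseq]

lemma Pseq_le_Pseq {m n : ℕ} (hp : ∀ k ∈ Icc 1 (n * B), 0 ≤ p k x) (hmn : m ≤ n) :
    Pseq lam μ p B m x ≤ Pseq lam μ p B n x :=
  add_le_add_right (sum_le_sum_of_subset_of_nonneg
    (Icc_subset_Icc_right (Nat.mul_le_mul_right B hmn)) fun k hk _ => hp k hk) _

lemma Pseq_le_mul {C : ℝ} {m : ℕ} (hcov : ∀ k ∈ Icc 1 (m * B), p k x ≤ C * μ x) :
    Pseq lam μ p B m x ≤ (lam + C * (m * B : ℕ)) * μ x := by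
  have hsum := sum_le_card_nsmul _ _ _ hcov
  rw [Nat.card_Icc, Nat.add_sub_cancel, nsmul_eq_mul] at hsum
  rw [Pseq]
  linarith

lemma card_badBatches_le_logb {C : ℝ} {M : ℕ} (hlam : 0 < lam) (hμ : 0 < μ x)
    (hp : ∀ k ∈ Icc 1 (M * B), 0 ≤ p k x) (hcov : ∀ k ∈ Icc 1 (M * B), p k x ≤ C * μ x) :
    (#(badBatches lam μ p B M x) : ℝ) ≤ Real.logb 2 (1 + C * (M * B : ℕ) / lam) := by
  have h0 : 0 < Pseq lam μ p B 0 x := by rw [Pseq_zero]; positivity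
  have hmono : ∀ n < M, Pseq lam μ p B n x ≤ Pseq lam μ p B (n + 1) x := fun n hn =>
    Pseq_le_Pseq (fun k hk => hp k (Icc_subset_Icc_right (Nat.mul_le_mul_right B hn) hk))
      n.le_succ
  have hratio : Pseq lam μ p B M x / Pseq lam μ p B 0 x ≤ 1 + C * (M * B : ℕ) / lam := by
    rw [div_le_iff₀ h0, Pseq_zero]
    calc Pseq lam μ p B M x ≤ (lam + C * (M * B : ℕ)) * μ x := Pseq_le_mul hcov
      _ = (1 + C * (M * B : ℕ) / lam) * (lam * μ x) := by field_simp
  have hM : 0 < Pseq lam μ p B M x := h0.trans_le (Pseq_le_Pseq hp M.zero_le)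
  exact (card_doubling_le_logb h0 hmono).trans
    (Real.logb_le_logb_of_le one_lt_two (div_pos hM h0) hratio)

end Potential

lemma card_Icc_batch {B m : ℕ} (hm : 1 ≤ m) : #(Icc ((m - 1) * B + 1) (m * B)) = B := by
  obtain ⟨n, rfl⟩ := Nat.exists_eq_add_of_le' hm
  rw [Nat.card_Icc, Nat.add_sub_cancel]
  ring_nf
  omega

lemma Icc_batch_subset {B m M : ℕ} (hm : m ≤ M) :
    Icc ((m - 1) * B + 1) (m * B) ⊆ Icc 1 (M * B) :=
  Icc_subset_Icc (Nat.le_add_left 1 _) (Nat.mul_le_mul_right B hm)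

lemma sum_mul_le_card_mul {ι : Type*} {s : Finset ι} {p f : ι → ℝ} {c : ℝ}
    (hp : ∀ k ∈ s, 0 ≤ p k) (hcov : ∀ k ∈ s, p k ≤ c) (hf : ∀ k ∈ s, f k ≤ 1) :
    ∑ k ∈ s, p k * f k ≤ #s * c := by
  rw [← nsmul_eq_mul]
  exact sum_le_card_nsmul _ _ _ fun k hk =>
    (mul_le_of_le_one_right (hp k hk) (hf k hk)).trans (hcov k hk)

section BadBatchTerm

variable {X : Type*} {lam : ℝ} {μ : X → ℝ} {p f : ℕ → X → ℝ} {B M : ℕ} {x : X}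

lemma sum_badBatches_nonneg (hp : ∀ k ∈ Icc 1 (M * B), 0 ≤ p k x)
    (hf : ∀ k ∈ Icc 1 (M * B), 0 ≤ f k x) :
    0 ≤ ∑ m ∈ badBatches lam μ p B M x, ∑ k ∈ Icc ((m - 1) * B + 1) (m * B), p k x * f k x :=
  sum_nonneg fun _ hm => sum_nonneg fun k hk =>
    have hkK := Icc_batch_subset (mem_Icc.1 (mem_filter.1 hm).1).2 hk
    mul_nonneg (hp k hkK) (hf k hkK)

lemma sum_badBatches_le {C : ℝ} (hC : 0 ≤ C) (hlam : 0 < lam) (hμ : 0 < μ x)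
    (hp : ∀ k ∈ Icc 1 (M * B), 0 ≤ p k x) (hcov : ∀ k ∈ Icc 1 (M * B), p k x ≤ C * μ x)
    (hf : ∀ k ∈ Icc 1 (M * B), f k x ≤ 1) :
    ∑ m ∈ badBatches lam μ p B M x, ∑ k ∈ Icc ((m - 1) * B + 1) (m * B), p k x * f k x ≤
      C * B * Real.logb 2 (1 + C * (M * B : ℕ) / lam) * μ x := by
  have hbatch : ∀ m ∈ badBatches lam μ p B M x,
      ∑ k ∈ Icc ((m - 1) * B + 1) (m * B), p k x * f k x ≤ B * (C * μ x) := by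
    intro m hm
    obtain ⟨hm1, hmM⟩ := mem_Icc.1 (mem_filter.1 hm).1
    have hsub := Icc_batch_subset (B := B) hmM
    have hsum := sum_mul_le_card_mul (fun k hk => hp k (hsub hk))
      (fun k hk => hcov k (hsub hk)) fun k hk => hf k (hsub hk)
    rwa [card_Icc_batch hm1] at hsum
  calc _ ≤ ∑ _m ∈ badBatches lam μ p B M x, (B : ℝ) * (C * μ x) := sum_le_sum hbatch
    _ = #(badBatches lam μ p B M x) * (B * (C * μ x)) := by rw [sum_const, nsmul_eq_mul]
    _ ≤ Real.logb 2 (1 + C * (M * B : ℕ) / lam) * (B * (C * μ x)) :=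
        mul_le_mul_of_nonneg_right (card_badBatches_le_logb hlam hμ hp hcov) (by positivity)
    _ = C * B * Real.logb 2 (1 + C * (M * B : ℕ) / lam) * μ x := by ring

end BadBatchTerm

lemma tsum_subtype_le_mul_tsum {X : Type*} {μ g : X → ℝ} {P : X → Prop} {c : ℝ}
    (hμ : ∀ x, 0 ≤ μ x) (hμs : Summable μ) (hc : 0 ≤ c)
    (hg0 : ∀ x, P x → 0 ≤ g x) (hg : ∀ x, P x → g x ≤ c * μ x) :
    ∑' x : {x // P x}, g x ≤ c * ∑' x, μ x := by
  have hcμ : Summable fun x : {x // P x} => c * μ x := (hμs.subtype _).mul_left c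
  calc ∑' x : {x // P x}, g x ≤ ∑' x : {x // P x}, c * μ x :=
        (hcμ.of_nonneg_of_le (fun x => hg0 x.1 x.2) fun x => hg x.1 x.2).tsum_le_tsum
          (fun x => hg x.1 x.2) hcμ
    _ = c * ∑' x : {x // P x}, μ x := tsum_mul_left
    _ ≤ c * ∑' x, μ x :=
        mul_le_mul_of_nonneg_left (hμs.tsum_subtype_le μ {x | P x} hμ) hc

theorem bad_batch_term_bound_general
    {X : Type*}
    (K B : ℕ) (hBK : B ∣ K)
    (p : ℕ → X → ℝ) (μ : X → ℝ)
    (hp_nonneg : ∀ k ∈ Finset.Icc 1 K, ∀ x, 0 ≤ p k x)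
    (hμ_nonneg : ∀ x, 0 ≤ μ x)
    (hμ_summable : Summable μ)
    (hμ_sum : ∑' x, μ x = 1)
    (C : ℝ) (hC : 0 < C)
    (hcov : ∀ k ∈ Finset.Icc 1 K, ∀ x, p k x ≤ C * μ x)
    (lam : ℝ) (hlam : 0 < lam)
    (f : ℕ → X → ℝ)
    (hf : ∀ k ∈ Finset.Icc 1 K, ∀ x, f k x ∈ Set.Icc (0 : ℝ) 1) :
    ∑' x : {x : X // 0 < μ x},
        ∑ m ∈ badBatches lam μ p B (K / B) (x : X),
          ∑ k ∈ Finset.Icc ((m - 1) * B + 1) (m * B), p k (x : X) * f k (x : X) ≤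
      C * B * Real.logb 2 (1 + C * K / lam) := by
  have hMB : K / B * B = K := Nat.div_mul_cancel hBK
  have hlog : 0 ≤ Real.logb 2 (1 + C * K / lam) :=
    Real.logb_nonneg one_lt_two (le_add_of_nonneg_right (by positivity))
  have hp x : ∀ k ∈ Icc 1 (K / B * B), 0 ≤ p k x := fun k hk => hp_nonneg k (hMB ▸ hk) x
  have hf x : ∀ k ∈ Icc 1 (K / B * B), f k x ∈ Set.Icc (0 : ℝ) 1 := fun k hk => hf k (hMB ▸ hk) x
  have hbound := tsum_subtype_le_mul_tsum (P := (0 < μ ·)) hμ_nonneg hμ_summable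
    (by positivity : 0 ≤ C * B * Real.logb 2 (1 + C * K / lam))
    (fun x _ => sum_badBatches_nonneg (hp x) fun k hk => (hf x k hk).1)
    (fun x hx => by
      simpa only [hMB] using sum_badBatches_le hC.le hlam hx (hp x)
        (fun k hk => hcov k (hMB ▸ hk) x) fun k hk => (hf x k hk).2)
  rwa [hμ_sum, mul_one] at hbound

/-- Bound on the bad-batch term `T_bad` in the proof of Lemma C.1 of the paper.
The `m`-th batch consists of episodes `t_m, …, t_{m+1} - 1` where
`t_m = (m-1)·B + 1`, i.e. episodes `(m-1)·B + 1, …, m·B`. -/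
theorem bad_batch_term_bound
    {X : Type*} [Countable X]
    (K B : ℕ) (hK : 0 < K) (hB : 0 < B) (hBK : B ∣ K)
    (p : ℕ → X → ℝ) (μ : X → ℝ)
    (hp_nonneg : ∀ k ∈ Finset.Icc 1 K, ∀ x, 0 ≤ p k x)
    (hp_summable : ∀ k ∈ Finset.Icc 1 K, Summable (p k))
    (hp_sum : ∀ k ∈ Finset.Icc 1 K, ∑' x, p k x = 1)
    (hμ_nonneg : ∀ x, 0 ≤ μ x)
    (hμ_summable : Summable μ)
    (hμ_sum : ∑' x, μ x = 1)
    (C : ℝ) (hC : 0 < C)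
    (hcov : ∀ k ∈ Finset.Icc 1 K, ∀ x, p k x ≤ C * μ x)
    (lam : ℝ) (hlam : 0 < lam)
    (f : ℕ → X → ℝ)
    (hf : ∀ k ∈ Finset.Icc 1 K, ∀ x, f k x ∈ Set.Icc (0 : ℝ) 1) :
    ∑' x : {x : X // 0 < μ x},
        ∑ m ∈ badBatches lam μ p B (K / B) (x : X),
          ∑ k ∈ Finset.Icc ((m - 1) * B + 1) (m * B), p k (x : X) * f k (x : X) ≤
      C * B * Real.logb 2 (1 + C * K / lam) :=
  bad_batch_term_bound_general K B hBK p μ hp_nonneg hμ_nonneg hμ_summable hμ_sum C hC hcov lam hlam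
    f hf
end
end

section
/- Let K be a positive integer, let X be a countable set, let p_1,…,p_K and μ be probability mass functions on X, let C > 0 satisfy p_k(x) ≤ C·μ(x) for all k and x, and let λ > 0. Define p̂_k(x) := λ·μ(x) + ∑_{t=1}^{k} p_t(x). Then ∑_{k=1}^K ∑_{x∈X, μ(x)>0} p_k(x)² / p̂_k(x) ≤ 2·C·log(1 + C·K/λ). -/
/-!
Fix `x` with `μ x > 0` and write `S_k = p̂_k(x)`, so `S_k = S_{k-1} + p_k(x)`. The elementary
inequality `u / (a + u) ≤ log (a + u) - log a` gives
`p_k(x)² / S_k ≤ C μ(x) · p_k(x) / S_k ≤ C μ(x) (log S_k - log S_{k-1})`, and the sum over `k`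
telescopes to `C μ(x) log (S_K / S_0) ≤ C μ(x) log (1 + C K / λ)`, since `S_0 = λ μ(x)` and
`S_K ≤ (λ + C K) μ(x)`. Summing over `x` costs a factor `∑ μ ≤ 1`.
-/

open scoped BigOperators

noncomputable section

/-- `p̂_k(x) := λ·μ(x) + ∑_{t=1}^{k} p_t(x)`. -/
def pHat {X : Type*} (lam : ℝ) (μ : X → ℝ) (p : ℕ → X → ℝ) (k : ℕ) (x : X) : ℝ :=
  lam * μ x + ∑ t ∈ Finset.Icc 1 k, p t x

open Finset Real

theorem div_add_le_log_add_sub_log {a u : ℝ} (ha : 0 < a) (hu : 0 ≤ u) :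
    u / (a + u) ≤ log (a + u) - log a := by
  have h := one_sub_inv_le_log_of_pos (div_pos (add_pos_of_pos_of_nonneg ha hu) ha)
  rw [log_div (by positivity) ha.ne', inv_div] at h
  calc u / (a + u) = 1 - a / (a + u) := by field_simp; ring
    _ ≤ log (a + u) - log a := h

section Potential

variable {a : ℕ → ℝ} {b c : ℝ} {K : ℕ}

theorem add_sum_Icc_pos (hb : 0 < b) (ha : ∀ k ∈ Icc 1 K, 0 ≤ a k) {k : ℕ} (hk : k ≤ K) :
    0 < b + ∑ t ∈ Icc 1 k, a t :=
  add_pos_of_pos_of_nonneg hb <| sum_nonneg fun t ht =>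
    ha t (mem_Icc.2 ⟨(mem_Icc.1 ht).1, (mem_Icc.1 ht).2.trans hk⟩)

theorem sum_sq_div_add_sum_Icc_le_log_sub (hb : 0 < b) (ha : ∀ k ∈ Icc 1 K, 0 ≤ a k)
    (hac : ∀ k ∈ Icc 1 K, a k ≤ c) :
    ∑ k ∈ Icc 1 K, a k ^ 2 / (b + ∑ t ∈ Icc 1 k, a t) ≤
      c * (log (b + ∑ t ∈ Icc 1 K, a t) - log b) := by
  induction K with
  | zero => simp
  | succ K ih =>
    have hK : K + 1 ∈ Icc 1 (K + 1) := mem_Icc.2 ⟨K.succ_pos, le_rfl⟩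
    have hsub : Icc 1 K ⊆ Icc 1 (K + 1) := Icc_subset_Icc_right K.le_succ
    have hS : 0 < b + ∑ t ∈ Icc 1 K, a t := add_sum_Icc_pos hb ha K.le_succ
    have ha₀ := ha _ hK
    have hc : 0 ≤ c := ha₀.trans (hac _ hK)
    have hstep : a (K + 1) ^ 2 / (b + ∑ t ∈ Icc 1 (K + 1), a t) ≤
        c * (log (b + ∑ t ∈ Icc 1 (K + 1), a t) - log (b + ∑ t ∈ Icc 1 K, a t)) := by
      rw [sum_Icc_succ_top K.succ_pos, ← add_assoc]
      calc a (K + 1) ^ 2 / (b + ∑ t ∈ Icc 1 K, a t + a (K + 1))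
          = a (K + 1) * (a (K + 1) / (b + ∑ t ∈ Icc 1 K, a t + a (K + 1))) := by ring
        _ ≤ c * (a (K + 1) / (b + ∑ t ∈ Icc 1 K, a t + a (K + 1))) :=
          mul_le_mul_of_nonneg_right (hac _ hK) (by positivity)
        _ ≤ _ := mul_le_mul_of_nonneg_left (div_add_le_log_add_sub_log hS ha₀) hc
    rw [sum_Icc_succ_top K.succ_pos]
    linarith [ih (fun k hk => ha k (hsub hk)) (fun k hk => hac k (hsub hk))]

theorem sum_sq_div_add_sum_Icc_le_log (hb : 0 < b) (ha : ∀ k ∈ Icc 1 K, 0 ≤ a k)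
    (hac : ∀ k ∈ Icc 1 K, a k ≤ c) :
    ∑ k ∈ Icc 1 K, a k ^ 2 / (b + ∑ t ∈ Icc 1 k, a t) ≤ c * log (1 + c * K / b) := by
  refine (sum_sq_div_add_sum_Icc_le_log_sub hb ha hac).trans ?_
  rcases K.eq_zero_or_pos with rfl | hKpos
  · simp
  have hc : 0 ≤ c := (ha 1 (mem_Icc.2 ⟨le_rfl, hKpos⟩)).trans (hac 1 (mem_Icc.2 ⟨le_rfl, hKpos⟩))
  have hsum : ∑ t ∈ Icc 1 K, a t ≤ c * K := by
    simpa [mul_comm] using sum_le_sum hac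
  have hlog : log (b + ∑ t ∈ Icc 1 K, a t) ≤ log (b * (1 + c * K / b)) := by
    refine log_le_log (add_sum_Icc_pos hb ha le_rfl) ?_
    rw [mul_add, mul_div_cancel₀ _ hb.ne']
    linarith
  rw [log_mul hb.ne' (by positivity)] at hlog
  exact mul_le_mul_of_nonneg_left (by linarith) hc

end Potential

theorem sum_sq_div_pHat_le {X : Type*} {K : ℕ} {p : ℕ → X → ℝ} {μ : X → ℝ} {C lam : ℝ}
    (hp_nonneg : ∀ k ∈ Icc 1 K, ∀ x, 0 ≤ p k x) (hcov : ∀ k ∈ Icc 1 K, ∀ x, p k x ≤ C * μ x)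
    (hlam : 0 < lam) {x : X} (hx : 0 < μ x) :
    ∑ k ∈ Icc 1 K, p k x ^ 2 / pHat lam μ p k x ≤ C * μ x * log (1 + C * K / lam) := by
  have h := sum_sq_div_add_sum_Icc_le_log (mul_pos hlam hx) (fun k hk => hp_nonneg k hk x)
    (fun k hk => hcov k hk x)
  rwa [show C * μ x * K / (lam * μ x) = C * K / lam by field_simp [hx.ne']] at h

theorem coverability_potential_bound_general
    {X : Type*}
    (K : ℕ)
    (p : ℕ → X → ℝ) (μ : X → ℝ)
    (hp_nonneg : ∀ k ∈ Finset.Icc 1 K, ∀ x, 0 ≤ p k x)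
    (hμ_nonneg : ∀ x, 0 ≤ μ x)
    (hμ_summable : Summable μ)
    (hμ_sum : ∑' x, μ x = 1)
    (C : ℝ) (hC : 0 < C)
    (hcov : ∀ k ∈ Finset.Icc 1 K, ∀ x, p k x ≤ C * μ x)
    (lam : ℝ) (hlam : 0 < lam) :
    ∑ k ∈ Finset.Icc 1 K,
        ∑' x : {x : X // 0 < μ x}, (p k (x : X)) ^ 2 / pHat lam μ p k (x : X) ≤
      2 * C * Real.log (1 + C * K / lam) := by
  set L := log (1 + C * K / lam)
  set f : ℕ → {x : X // 0 < μ x} → ℝ := fun k x => p k x ^ 2 / pHat lam μ p k x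
  have hCL : 0 ≤ C * L := mul_nonneg hC.le (log_nonneg (le_add_of_nonneg_right (by positivity)))
  have hf_nonneg : ∀ k ∈ Icc 1 K, ∀ x, 0 ≤ f k x := fun k hk x =>
    div_nonneg (sq_nonneg _)
      (add_sum_Icc_pos (mul_pos hlam x.2) (fun t ht => hp_nonneg t ht x) (mem_Icc.1 hk).2).le
  have hpoint : ∀ x : {x : X // 0 < μ x}, ∑ k ∈ Icc 1 K, f k x ≤ C * L * μ x := fun x =>
    (sum_sq_div_pHat_le hp_nonneg hcov hlam x.2).trans_eq (by ring)
  have hμS : Summable fun x : {x : X // 0 < μ x} => C * L * μ x :=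
    (hμ_summable.subtype _).mul_left _
  have hf_summable : ∀ k ∈ Icc 1 K, Summable (f k) := fun k hk =>
    hμS.of_nonneg_of_le (hf_nonneg k hk) fun x =>
      (single_le_sum (fun j hj => hf_nonneg j hj x) hk).trans (hpoint x)
  calc ∑ k ∈ Icc 1 K, ∑' x, f k x = ∑' x, ∑ k ∈ Icc 1 K, f k x :=
        (Summable.tsum_finsetSum hf_summable).symm
    _ ≤ ∑' x : {x : X // 0 < μ x}, C * L * μ x :=
        Summable.tsum_le_tsum hpoint (summable_sum hf_summable) hμS
    _ = C * L * ∑' x : {x : X // 0 < μ x}, μ x := tsum_mul_left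
    _ ≤ C * L * 1 := by
        gcongr
        exact hμ_sum ▸ hμ_summable.tsum_subtype_le μ _ hμ_nonneg
    _ ≤ 2 * C * L := by linarith

/-- Coverability potential bound (the bound on `T₁`) from the proof of
Lemma C.1 of the paper. -/
theorem coverability_potential_bound
    {X : Type*} [Countable X]
    (K : ℕ) (hK : 0 < K)
    (p : ℕ → X → ℝ) (μ : X → ℝ)
    (hp_nonneg : ∀ k ∈ Finset.Icc 1 K, ∀ x, 0 ≤ p k x)
    (hp_summable : ∀ k ∈ Finset.Icc 1 K, Summable (p k))
    (hp_sum : ∀ k ∈ Finset.Icc 1 K, ∑' x, p k x = 1)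
    (hμ_nonneg : ∀ x, 0 ≤ μ x)
    (hμ_summable : Summable μ)
    (hμ_sum : ∑' x, μ x = 1)
    (C : ℝ) (hC : 0 < C)
    (hcov : ∀ k ∈ Finset.Icc 1 K, ∀ x, p k x ≤ C * μ x)
    (lam : ℝ) (hlam : 0 < lam) :
    ∑ k ∈ Finset.Icc 1 K,
        ∑' x : {x : X // 0 < μ x}, (p k (x : X)) ^ 2 / pHat lam μ p k (x : X) ≤
      2 * C * Real.log (1 + C * K / lam) :=
  coverability_potential_bound_general K p μ hp_nonneg hμ_nonneg hμ_summable hμ_sum C hC hcov lam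
    hlam
end
end

section
/- Let K, B, d be positive integers with B dividing K, and for k ∈ {1,…,K} let [k] := B·⌊(k−1)/B⌋ + 1. Let λ > 0 and let φ^(1),…,φ^(K), ψ^(1),…,ψ^(K) ∈ ℝ^d satisfy |⟨ψ^(k), φ^(k)⟩| ≤ 1 for all k. Define V_0 := λ·I_d, V_k := λ·I_d + ∑_{j=1}^{k} φ^(j)(φ^(j))ᵀ, and Ψ := {k ∈ {1,…,K} : ‖φ^(k)‖_{V_{[k]−1}^{-1}} > 2·‖φ^(k)‖_{V_{k−1}^{-1}}}. Then ∑_{k∉Ψ} |⟨ψ^(k), φ^(k)⟩| ≤ 2·√( ∑_{k=1}^K min{1, ‖φ^(k)‖²_{V_{k−1}^{-1}}} ) · √( ∑_{k=1}^K max{1, ‖ψ^(k)‖²_{V_{[k]−1}}} ). -/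
open scoped BigOperators Matrix

noncomputable section

/-- Design matrix `V_k := λ·I_d + ∑_{j=1}^{k} φ^(j) (φ^(j))ᵀ` (so `V_0 = λ·I_d`). -/
def designMat (d : ℕ) (lam : ℝ) (φ : ℕ → Fin d → ℝ) (k : ℕ) :
    Matrix (Fin d) (Fin d) ℝ :=
  lam • (1 : Matrix (Fin d) (Fin d) ℝ) +
    ∑ j ∈ Finset.Icc 1 k, Matrix.vecMulVec (φ j) (φ j)

/-- `‖v‖_A := √(vᵀ A v)`. -/
def matNorm {d : ℕ} (A : Matrix (Fin d) (Fin d) ℝ) (v : Fin d → ℝ) : ℝ :=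
  Real.sqrt (v ⬝ᵥ A.mulVec v)

/-!
On a good round `k`, with `W := V_{[k]-1}`, Cauchy–Schwarz in the `W`-geometry gives
`|⟨ψ, φ⟩| ≤ ‖ψ‖_W ‖φ‖_{W⁻¹} ≤ 2 ‖ψ‖_W ‖φ‖_{V_{k-1}⁻¹}`; together with `|⟨ψ, φ⟩| ≤ 1` this is
at most `2 min(1, ‖φ‖_{V_{k-1}⁻¹}) max(1, ‖ψ‖_W)`. Summing over all rounds and applying the
Cauchy–Schwarz inequality for sums gives the bound.
-/

open Matrix Finset

namespace Matrix

variable {n : Type*} [Fintype n]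

theorem PosSemidef.dotProduct_mulVec_sq_le {A : Matrix n n ℝ} (hA : A.PosSemidef)
    (x y : n → ℝ) : (x ⬝ᵥ A *ᵥ y) ^ 2 ≤ (x ⬝ᵥ A *ᵥ x) * (y ⬝ᵥ A *ᵥ y) := by
  classical
  have hsymm : y ⬝ᵥ A *ᵥ x = x ⬝ᵥ A *ᵥ y := by
    rw [dotProduct_mulVec, ← mulVec_transpose, ← conjTranspose_eq_transpose_of_trivial,
      hA.isHermitian.eq, dotProduct_comm]
  have := LinearMap.BilinForm.apply_mul_apply_le_of_forall_zero_le (toLinearMap₂' ℝ A)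
    (fun z => by simpa [toLinearMap₂'_apply'] using hA.dotProduct_mulVec_nonneg z) x y
  simpa [toLinearMap₂'_apply', hsymm, sq] using this

variable [DecidableEq n]

theorem PosDef.abs_dotProduct_le {A : Matrix n n ℝ} (hA : A.PosDef) (x y : n → ℝ) :
    |x ⬝ᵥ y| ≤ √(x ⬝ᵥ A *ᵥ x) * √(y ⬝ᵥ A⁻¹ *ᵥ y) := by
  have hAA : A *ᵥ (A⁻¹ *ᵥ y) = y := by
    rw [mulVec_mulVec, mul_nonsing_inv _ ((isUnit_iff_isUnit_det A).mp hA.isUnit), one_mulVec]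
  have h := hA.posSemidef.dotProduct_mulVec_sq_le x (A⁻¹ *ᵥ y)
  rw [hAA, dotProduct_comm (A⁻¹ *ᵥ y)] at h
  have hx : 0 ≤ x ⬝ᵥ A *ᵥ x := by simpa using hA.posSemidef.dotProduct_mulVec_nonneg x
  rw [← Real.sqrt_mul hx]
  exact Real.abs_le_sqrt h

end Matrix

theorem designMat_posDef {d : ℕ} {lam : ℝ} (hlam : 0 < lam) (φ : ℕ → Fin d → ℝ) (k : ℕ) :
    (designMat d lam φ k).PosDef :=
  (PosDef.one.smul hlam).add_posSemidef
    (posSemidef_sum _ fun j _ => by simpa using posSemidef_vecMulVec_self_star (φ j))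

theorem le_two_mul_min_mul_max {x a b : ℝ} (ha : 0 ≤ a) (h1 : x ≤ 1)
    (h2 : x ≤ 2 * (a * b)) : x ≤ 2 * (min 1 a * max 1 b) := by
  rcases le_total 1 a with h | h <;> rcases le_total 1 b with h' | h' <;>
    simp only [min_eq_left, min_eq_right, max_eq_left, max_eq_right, *] <;> nlinarith

theorem min_one_sqrt (q : ℝ) : min 1 √q = √(min 1 q) := by
  rw [Real.sqrt_monotone.map_min, Real.sqrt_one]

theorem max_one_sqrt (q : ℝ) : max 1 √q = √(max 1 q) := by
  rw [Real.sqrt_monotone.map_max, Real.sqrt_one]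

theorem abs_dotProduct_le_of_matNorm_inv_le {d : ℕ} {W U : Matrix (Fin d) (Fin d) ℝ}
    (hW : W.PosDef) {x y : Fin d → ℝ} (hgood : matNorm W⁻¹ y ≤ 2 * matNorm U y)
    (hxy : |x ⬝ᵥ y| ≤ 1) :
    |x ⬝ᵥ y| ≤ 2 * (√(min 1 (y ⬝ᵥ U *ᵥ y)) * √(max 1 (x ⬝ᵥ W *ᵥ x))) := by
  rw [← min_one_sqrt, ← max_one_sqrt]
  refine le_two_mul_min_mul_max (Real.sqrt_nonneg _) hxy ?_
  calc |x ⬝ᵥ y| ≤ √(x ⬝ᵥ W *ᵥ x) * matNorm W⁻¹ y := hW.abs_dotProduct_le x y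
    _ ≤ √(x ⬝ᵥ W *ᵥ x) * (2 * matNorm U y) := by gcongr
    _ = 2 * (matNorm U y * √(x ⬝ᵥ W *ᵥ x)) := by ring

theorem good_round_cauchy_schwarz_general
    (K B d : ℕ)
    (lam : ℝ) (hlam : 0 < lam)
    (φ ψ : ℕ → Fin d → ℝ)
    (hpair : ∀ k ∈ Finset.Icc 1 K, |ψ k ⬝ᵥ φ k| ≤ 1) :
    ∑ k ∈ Finset.Icc 1 K \ ((Finset.Icc 1 K).filter fun k =>
          2 * matNorm (designMat d lam φ (k - 1))⁻¹ (φ k) <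
            matNorm (designMat d lam φ (batchStart B k - 1))⁻¹ (φ k)),
        |ψ k ⬝ᵥ φ k| ≤
      2 * Real.sqrt (∑ k ∈ Finset.Icc 1 K,
            min 1 (φ k ⬝ᵥ (designMat d lam φ (k - 1))⁻¹.mulVec (φ k))) *
        Real.sqrt (∑ k ∈ Finset.Icc 1 K,
            max 1 (ψ k ⬝ᵥ (designMat d lam φ (batchStart B k - 1)).mulVec (ψ k))) := by
  set V := designMat d lam φ
  have hV (m : ℕ) : (V m).PosDef := designMat_posDef hlam φ m
  set q : ℕ → ℝ := fun k => min 1 (φ k ⬝ᵥ (V (k - 1))⁻¹ *ᵥ φ k)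
  set r : ℕ → ℝ := fun k => max 1 (ψ k ⬝ᵥ V (batchStart B k - 1) *ᵥ ψ k)
  have hq (k : ℕ) : 0 ≤ q k :=
    le_min zero_le_one (by simpa using (hV _).inv.posSemidef.dotProduct_mulVec_nonneg (φ k))
  have hr (k : ℕ) : 0 ≤ r k := zero_le_one.trans (le_max_left _ _)
  calc _ ≤ ∑ k ∈ _, 2 * (√(q k) * √(r k)) := sum_le_sum fun k hk => by
        rw [mem_sdiff, mem_filter] at hk
        exact abs_dotProduct_le_of_matNorm_inv_le (hV _)
          (not_lt.mp fun hbad => hk.2 ⟨hk.1, hbad⟩) (hpair k hk.1)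
    _ ≤ ∑ k ∈ Icc 1 K, 2 * (√(q k) * √(r k)) :=
        sum_le_sum_of_subset_of_nonneg sdiff_subset fun _ _ _ => by positivity
    _ = 2 * ∑ k ∈ Icc 1 K, √(q k) * √(r k) := (mul_sum _ _ _).symm
    _ ≤ 2 * (√(∑ k ∈ Icc 1 K, q k) * √(∑ k ∈ Icc 1 K, r k)) := by
        gcongr
        exact Real.sum_sqrt_mul_sqrt_le _ hq hr
    _ = _ := (mul_assoc _ _ _).symm

/-- Cauchy–Schwarz bound on the good rounds, established in the proof of
Lemma D.1 of the paper. -/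
theorem good_round_cauchy_schwarz
    (K B d : ℕ) (hK : 0 < K) (hB : 0 < B) (hd : 0 < d) (hBK : B ∣ K)
    (lam : ℝ) (hlam : 0 < lam)
    (φ ψ : ℕ → Fin d → ℝ)
    (hpair : ∀ k ∈ Finset.Icc 1 K, |ψ k ⬝ᵥ φ k| ≤ 1) :
    ∑ k ∈ Finset.Icc 1 K \ ((Finset.Icc 1 K).filter fun k =>
          2 * matNorm (designMat d lam φ (k - 1))⁻¹ (φ k) <
            matNorm (designMat d lam φ (batchStart B k - 1))⁻¹ (φ k)),
        |ψ k ⬝ᵥ φ k| ≤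
      2 * Real.sqrt (∑ k ∈ Finset.Icc 1 K,
            min 1 (φ k ⬝ᵥ (designMat d lam φ (k - 1))⁻¹.mulVec (φ k))) *
        Real.sqrt (∑ k ∈ Finset.Icc 1 K,
            max 1 (ψ k ⬝ᵥ (designMat d lam φ (batchStart B k - 1)).mulVec (ψ k))) :=
  good_round_cauchy_schwarz_general K B d lam hlam φ ψ hpair
end
end

section
/- Let V and W be d×d symmetric positive definite real matrices with V ⪯ W (i.e., W − V positive semidefinite), and let φ ∈ ℝ^d be a nonzero vector such that φᵀV⁻¹φ > 4·φᵀW⁻¹φ. Then det W > 4·det V. -/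
/-!
Put `t = det W / det V`. After normalising by `V^{1/2}`, the matrix
`M = V^{-1/2} W V^{-1/2}` satisfies `1 ⪯ M`, so all its eigenvalues are at least `1` and each of
them is at most their product `det M = t`. Hence `W ⪯ t V`, and since inversion is antitone,
`t⁻¹ V⁻¹ ⪯ W⁻¹`. Evaluating at `φ` gives `φᵀV⁻¹φ ≤ t φᵀW⁻¹φ < (t / 4) φᵀV⁻¹φ`, so `t > 4`.
-/

open scoped Matrix MatrixOrder ComplexOrder

namespace Matrix

section RCLike

variable {n 𝕜 : Type*} [RCLike 𝕜]

lemma PosDef.of_le {A B : Matrix n n 𝕜} (hA : A.PosDef) (h : A ≤ B) : B.PosDef := by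
  simpa using hA.add_posSemidef (le_iff.mp h)

variable [Fintype n] [DecidableEq n]

/-- The block matrix `[[B, 1], [1, A⁻¹]]` is positive semidefinite exactly when either of its
Schur complements, `B - A` and `A⁻¹ - B⁻¹`, is. -/
lemma PosDef.inv_le_inv {A B : Matrix n n 𝕜} (hA : A.PosDef) (h : A ≤ B) : B⁻¹ ≤ A⁻¹ := by
  have hB := hA.of_le h
  let := hB.isUnit.invertible
  let := hA.inv.isUnit.invertible
  have hblock : (fromBlocks B 1 1ᴴ A⁻¹).PosSemidef := by
    rw [PosDef.fromBlocks₂₂ _ _ hA.inv, conjTranspose_one, one_mul, mul_one,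
      nonsing_inv_nonsing_inv A ((isUnit_iff_isUnit_det A).mp hA.isUnit)]
    exact h
  rw [le_iff]
  simpa using (PosDef.fromBlocks₁₁ _ _ hB).mp hblock

end RCLike

variable {n : Type*} [Fintype n]

lemma dotProduct_mulVec_le_of_le {A B : Matrix n n ℝ} (h : A ≤ B) (x : n → ℝ) :
    x ⬝ᵥ A *ᵥ x ≤ x ⬝ᵥ B *ᵥ x := by
  simpa [sub_mulVec] using (le_iff.mp h).dotProduct_mulVec_nonneg x

variable [DecidableEq n]

lemma inv_smul_of_ne_zero {α : Type*} [Field α] (A : Matrix n n α) (hA : IsUnit A.det) {t : α}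
    (ht : t ≠ 0) : (t • A)⁻¹ = t⁻¹ • A⁻¹ := by
  simpa only [Units.smul_def, Units.val_inv_eq_inv_val, Units.val_mk0] using
    inv_smul' A (Units.mk0 t ht) hA

lemma le_det_smul_one_of_one_le {M : Matrix n n ℝ} (h : 1 ≤ M) : M ≤ M.det • 1 := by
  have hM : M.IsHermitian := by
    simpa using (le_iff.mp h).isHermitian.add isHermitian_one
  have hev : ∀ i, 1 ≤ hM.eigenvalues i := by
    have := (CFC.one_le_iff (R := ℝ) M hM.isSelfAdjoint).mp h
    rw [hM.spectrum_real_eq_range_eigenvalues] at this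
    exact fun i => this _ ⟨i, rfl⟩
  rw [← Algebra.algebraMap_eq_smul_one]
  refine le_algebraMap_of_spectrum_le ?_ hM.isSelfAdjoint
  rw [hM.spectrum_real_eq_range_eigenvalues]
  rintro _ ⟨i, rfl⟩
  rw [hM.det_eq_prod_eigenvalues]
  simp only [Real.ringHom_apply]
  exact Multiset.mem_le_prod_of_one_le hev (Finset.mem_univ i)

lemma PosDef.le_det_div_det_smul_of_le {A B : Matrix n n ℝ} (hA : A.PosDef) (h : A ≤ B) :
    B ≤ (B.det / A.det) • A := by
  set R := CFC.sqrt A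
  have hR : IsSelfAdjoint R := .of_nonneg (CFC.sqrt_nonneg A)
  have hRR : R * R = A := CFC.sqrt_mul_sqrt_self A hA.posSemidef.nonneg
  have hRdet : IsUnit R.det := (isUnit_iff_isUnit_det R).mp
    ((CFC.isUnit_sqrt_iff A hA.posSemidef.nonneg).mpr hA.isUnit)
  have hQR : R⁻¹ * R = 1 := nonsing_inv_mul R hRdet
  have hRQ : R * R⁻¹ = 1 := mul_nonsing_inv R hRdet
  set M := R⁻¹ * B * R⁻¹
  have hM : 1 ≤ M := by
    have := IsSelfAdjoint.conjugate_le_conjugate h (IsHermitian.inv hR)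
    rwa [← hRR, show R⁻¹ * (R * R) * R⁻¹ = (R⁻¹ * R) * (R * R⁻¹) by simp only [mul_assoc],
      hQR, hRQ, one_mul] at this
  have hB : B = R * M * R := by
    simp only [M, ← mul_assoc, hRQ, one_mul]
    simp only [mul_assoc, hQR, mul_one]
  have hdet : M.det = B.det / A.det := by
    have := hRdet.ne_zero
    rw [← hRR, det_mul, det_mul, det_mul, det_nonsing_inv, Ring.inverse_eq_inv']
    field_simp
  calc B = R * M * R := hB
    _ ≤ R * (M.det • 1) * R := hR.conjugate_le_conjugate (le_det_smul_one_of_one_le hM)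
    _ = (B.det / A.det) • A := by rw [hdet, ← hRR]; simp

end Matrix

theorem det_comparison_of_norm_drop_general
    {d : ℕ} (V W : Matrix (Fin d) (Fin d) ℝ)
    (hV : V.PosDef) (hVW : (W - V).PosSemidef)
    (φ : Fin d → ℝ)
    (h : 4 * (φ ⬝ᵥ W⁻¹.mulVec φ) < φ ⬝ᵥ V⁻¹.mulVec φ) :
    4 * V.det < W.det := by
  have hW : W.PosDef := hV.of_le hVW
  set t := W.det / V.det
  have ht : 0 < t := div_pos hW.det_pos hV.det_pos
  have hinv : t⁻¹ • V⁻¹ ≤ W⁻¹ := by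
    rw [← Matrix.inv_smul_of_ne_zero V hV.det_pos.ne'.isUnit ht.ne']
    exact hW.inv_le_inv (hV.le_det_div_det_smul_of_le hVW)
  have hquad : t⁻¹ * (φ ⬝ᵥ V⁻¹ *ᵥ φ) ≤ φ ⬝ᵥ W⁻¹ *ᵥ φ := by
    simpa [Matrix.smul_mulVec] using Matrix.dotProduct_mulVec_le_of_le hinv φ
  have hWφ : 0 ≤ φ ⬝ᵥ W⁻¹ *ᵥ φ := by
    simpa using hW.inv.posSemidef.dotProduct_mulVec_nonneg φ
  have hVφ : 0 < φ ⬝ᵥ V⁻¹ *ᵥ φ := by linarith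
  have h4t : 4 < t := by
    by_contra! ht4
    have : 4⁻¹ * (φ ⬝ᵥ V⁻¹ *ᵥ φ) ≤ t⁻¹ * (φ ⬝ᵥ V⁻¹ *ᵥ φ) := by gcongr
    linarith
  rwa [lt_div_iff₀ hV.det_pos] at h4t

/-- Determinant comparison step from the proof of Lemma D.1 of the paper:
if `V ⪯ W` are symmetric positive definite and some nonzero `φ` satisfies
`φᵀV⁻¹φ > 4·φᵀW⁻¹φ`, then `det W > 4·det V`. -/
theorem det_comparison_of_norm_drop
    {d : ℕ} (V W : Matrix (Fin d) (Fin d) ℝ)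
    (hV : V.PosDef) (hW : W.PosDef) (hVW : (W - V).PosSemidef)
    (φ : Fin d → ℝ) (hφ : φ ≠ 0)
    (h : 4 * (φ ⬝ᵥ W⁻¹.mulVec φ) < φ ⬝ᵥ V⁻¹.mulVec φ) :
    4 * V.det < W.det :=
  det_comparison_of_norm_drop_general V W hV hVW φ h
end
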